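/- The Izergin–Korepin determinant satisfies the reduction K_{n+1}({x̄, z} | {ȳ, z+c}) = - Kₙ(x̄ | ȳ), i.e. appending z to the first set and z+c to the second set multiplies the determinant by -1. -/

import Mathlib

open Finset

lemma erase_last_eq_map (n : ℕ) :
    (Finset.univ : Finset (Fin (n + 1))).erase (Fin.last n)
      = Finset.univ.map Fin.castSuccEmb := by
  rw [Fin.univ_castSuccEmb, Finset.erase_cons]

lemma erase_castSucc_eq (n : ℕ) (j : Fin n) :
    (Finset.univ : Finset (Fin (n + 1))).erase j.castSucc
      = Finset.cons (Fin.last n) ((Finset.univ.erase j).map Fin.castSuccEmb)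
          (fun h => by
            obtain ⟨a, -, ha⟩ := Finset.mem_map.mp h
            exact (Fin.castSucc_lt_last a).ne (by simpa using ha)) := by
  ext k
  simp only [Finset.mem_erase, Finset.mem_univ, and_true, Finset.mem_cons, Finset.mem_map,
    Fin.coe_castSuccEmb]
  constructor
  · intro hk
    by_cases hl : k = Fin.last n
    · exact Or.inl hl
    · obtain ⟨a, rfl⟩ := Fin.exists_castSucc_eq.mpr hl
      exact Or.inr ⟨a, fun h => hk (congrArg Fin.castSucc h), rfl⟩
  · rintro (rfl | ⟨a, ha, rfl⟩)
    · exact (Fin.castSucc_lt_last j).ne'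
    · exact fun h => ha (Fin.castSucc_injective n h)

/-- Splitting the set of ordered pairs in `Fin (n+1)` into pairs of `castSucc`s and
pairs `(castSucc ℓ, last)`. -/
lemma pairs_split (n : ℕ) :
    (Finset.univ.filter (fun p : Fin (n + 1) × Fin (n + 1) => p.1 < p.2))
      = ((Finset.univ.filter (fun p : Fin n × Fin n => p.1 < p.2)).map
          (Fin.castSuccEmb.prodMap Fin.castSuccEmb)) ∪
        (Finset.univ.map ⟨fun ℓ : Fin n => (ℓ.castSucc, Fin.last n),
          fun a b h => Fin.castSucc_injective n (congrArg Prod.fst h)⟩) := by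
  ext ⟨a, b⟩
  simp only [Finset.mem_filter, Finset.mem_univ, true_and, Finset.mem_union, Finset.mem_map,
    Function.Embedding.coe_prodMap, Function.Embedding.coeFn_mk, Fin.coe_castSuccEmb,
    Prod.map, Prod.mk.injEq, Prod.ext_iff]
  constructor
  · intro hab
    by_cases hb : b = Fin.last n
    · subst hb
      obtain ⟨a', rfl⟩ := Fin.exists_castSucc_eq.mpr hab.ne
      exact Or.inr ⟨a', rfl, rfl⟩
    · obtain ⟨b', rfl⟩ := Fin.exists_castSucc_eq.mpr hb
      obtain ⟨a', rfl⟩ := Fin.exists_castSucc_eq.mpr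
        (ne_of_lt (lt_of_lt_of_le hab (Fin.le_last _)))
      exact Or.inl ⟨⟨a', b'⟩, Fin.castSucc_lt_castSucc_iff.mp hab, rfl, rfl⟩
  · rintro (⟨⟨a', b'⟩, h, rfl, rfl⟩ | ⟨ℓ, rfl, rfl⟩)
    · exact Fin.castSucc_lt_castSucc_iff.mpr h
    · exact Fin.castSucc_lt_last ℓ


/-- The Izergin–Korepin determinant
Kₙ(x̄|ȳ) = ∏_{ℓ<m} g(x_ℓ,x_m) g(y_m,y_ℓ) · ∏_{i,j} h(x_i,y_j) · det[t(x_i,y_j)],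
with g(x,y)=c/(x-y), h(x,y)=(x-y+c)/c, t(x,y)=c²/((x-y+c)(x-y)), written here in its
equivalent pole-free form, absorbing the row factors ∏_k h(x_i,y_k) into the
determinant: since h·t = g, the (i,j) entry becomes g(x_i,y_j)·∏_{k≠j} h(x_i,y_k).
(This form represents the same rational function and stays finite at the point
x = z, y = z + c appearing in the reduction property below, where the simple zero
h(z,z+c) = 0 of the prefactor cancels the simple pole of t(z,z+c).) -/
noncomputable def IK (c : ℂ) (n : ℕ) (x y : Fin n → ℂ) : ℂ :=
  (∏ p ∈ Finset.univ.filter (fun p : Fin n × Fin n => p.1 < p.2),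
      (c / (x p.1 - x p.2)) * (c / (y p.2 - y p.1))) *
  Matrix.det (Matrix.of fun i j =>
    (c / (x i - y j)) * ∏ k ∈ Finset.univ.erase j, (x i - y k + c) / c)

/-- Reduction property: appending z to the first set and z+c to the second set
multiplies the Izergin–Korepin determinant by -1:
K_{n+1}({x̄, z} | {ȳ, z+c}) = - Kₙ(x̄ | ȳ). -/
theorem IK_reduction (c : ℂ) (hc : c ≠ 0) (n : ℕ) (x y : Fin n → ℂ) (z : ℂ)
    (hx : ∀ i j, i ≠ j → x i ≠ x j) (hy : ∀ i j, i ≠ j → y i ≠ y j)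
    (hxy : ∀ i j, x i ≠ y j)
    (hxz : ∀ i, x i ≠ z) (hxzc : ∀ i, x i ≠ z + c)
    (hzy : ∀ j, z ≠ y j) (hyzc : ∀ j, y j ≠ z + c) :
    IK c (n + 1) (Fin.snoc x z) (Fin.snoc y (z + c)) = - IK c n x y := by
  set X : Fin (n + 1) → ℂ := Fin.snoc x z with hX
  set Y : Fin (n + 1) → ℂ := Fin.snoc y (z + c) with hY
  set A : Matrix (Fin (n + 1)) (Fin (n + 1)) ℂ := Matrix.of fun i j =>
    (c / (X i - Y j)) * ∏ k ∈ Finset.univ.erase j, (X i - Y k + c) / c with hA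
  set M : Matrix (Fin n) (Fin n) ℂ := Matrix.of fun i j =>
    (c / (x i - y j)) * ∏ k ∈ Finset.univ.erase j, (x i - y k + c) / c with hM
  -- determinant reduction
  have hAlastlast : A (Fin.last n) (Fin.last n)
      = -(∏ k : Fin n, (z - y k + c) / c) := by
    show (c / (X (Fin.last n) - Y (Fin.last n))) * ∏ k ∈ Finset.univ.erase (Fin.last n),
        (X (Fin.last n) - Y k + c) / c = _
    rw [erase_last_eq_map, Finset.prod_map]
    simp only [hX, hY, Fin.snoc_last, Fin.coe_castSuccEmb, Fin.snoc_castSucc]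
    have : z - (z + c) = -c := by ring
    rw [this, div_neg, div_self hc]
    ring
  have hAlastne : ∀ j : Fin (n + 1), j ≠ Fin.last n → A (Fin.last n) j = 0 := by
    intro j hj
    show (c / (X (Fin.last n) - Y j)) * ∏ k ∈ Finset.univ.erase j,
        (X (Fin.last n) - Y k + c) / c = 0
    have hmem : Fin.last n ∈ Finset.univ.erase j :=
      Finset.mem_erase.mpr ⟨Ne.symm hj, Finset.mem_univ _⟩
    rw [Finset.prod_eq_zero hmem, mul_zero]
    simp only [hX, hY, Fin.snoc_last]
    rw [show z - (z + c) + c = 0 by ring, zero_div]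
  have hsub : ∀ i j : Fin n, A i.castSucc j.castSucc = ((x i - z) / c) * M i j := by
    intro i j
    show (c / (X i.castSucc - Y j.castSucc)) * ∏ k ∈ Finset.univ.erase j.castSucc,
        (X i.castSucc - Y k + c) / c = _
    rw [erase_castSucc_eq, Finset.prod_cons, Finset.prod_map]
    simp only [hX, hY, Fin.snoc_last, Fin.coe_castSuccEmb, Fin.snoc_castSucc]
    show (c / (x i - y j)) * ((x i - (z + c) + c) / c * ∏ k ∈ Finset.univ.erase j,
        (x i - y k + c) / c) = _
    rw [show x i - (z + c) + c = x i - z by ring]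
    show _ = (x i - z) / c * ((c / (x i - y j)) * ∏ k ∈ Finset.univ.erase j,
        (x i - y k + c) / c)
    ring
  have hdetA : A.det = -(∏ k : Fin n, (z - y k + c) / c) *
      ((∏ i : Fin n, (x i - z) / c) * M.det) := by
    rw [Matrix.det_succ_row A (Fin.last n)]
    rw [Finset.sum_eq_single (Fin.last n)]
    · have hsm : (A.submatrix (Fin.last n).succAbove (Fin.last n).succAbove)
          = Matrix.of fun i j => ((x i - z) / c) * M i j := by
        ext i j
        simp only [Matrix.submatrix_apply, Fin.succAbove_last, Matrix.of_apply]
        exact hsub i j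
      rw [hsm, Matrix.det_mul_column, hAlastlast]
      have hpow : (-1 : ℂ) ^ ((Fin.last n : ℕ) + (Fin.last n : ℕ)) = 1 :=
        Even.neg_one_pow ⟨n, by simp [Fin.val_last]⟩
      rw [hpow]
      ring
    · intro j _ hj
      rw [hAlastne j hj, mul_zero, zero_mul]
    · intro h
      exact absurd (Finset.mem_univ _) h
  -- prefactor reduction
  have hdisj : Disjoint
      ((Finset.univ.filter (fun p : Fin n × Fin n => p.1 < p.2)).map
        (Fin.castSuccEmb.prodMap Fin.castSuccEmb))
      (Finset.univ.map ⟨fun ℓ : Fin n => (ℓ.castSucc, Fin.last n),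
        fun a b h => Fin.castSucc_injective n (congrArg Prod.fst h)⟩) := by
    rw [Finset.disjoint_left]
    rintro p h1 h2
    obtain ⟨q, -, rfl⟩ := Finset.mem_map.mp h1
    obtain ⟨ℓ, -, h⟩ := Finset.mem_map.mp h2
    have h2nd := congrArg Prod.snd h
    exact (Fin.castSucc_lt_last q.2).ne' (by simp at h2nd; exact h2nd)
  have hpre : (∏ p ∈ Finset.univ.filter (fun p : Fin (n + 1) × Fin (n + 1) => p.1 < p.2),
        (c / (X p.1 - X p.2)) * (c / (Y p.2 - Y p.1)))
      = (∏ p ∈ Finset.univ.filter (fun p : Fin n × Fin n => p.1 < p.2),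
          (c / (x p.1 - x p.2)) * (c / (y p.2 - y p.1))) *
        ∏ ℓ : Fin n, (c / (x ℓ - z)) * (c / (z + c - y ℓ)) := by
    rw [pairs_split, Finset.prod_union hdisj, Finset.prod_map, Finset.prod_map]
    congr 1
    · apply Finset.prod_congr rfl
      rintro ⟨a, b⟩ -
      simp [hX, hY, Fin.snoc_castSucc]
    · apply Finset.prod_congr rfl
      rintro ℓ -
      show c / (X ℓ.castSucc - X (Fin.last n)) * (c / (Y (Fin.last n) - Y ℓ.castSucc)) = _
      simp [hX, hY, Fin.snoc_castSucc, Fin.snoc_last]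
  -- put everything together
  show (∏ p ∈ Finset.univ.filter (fun p : Fin (n + 1) × Fin (n + 1) => p.1 < p.2),
        (c / (X p.1 - X p.2)) * (c / (Y p.2 - Y p.1))) * A.det = -IK c n x y
  rw [hpre, hdetA]
  unfold IK
  rw [← hM]
  have hone : (∏ ℓ : Fin n, (c / (x ℓ - z)) * (c / (z + c - y ℓ))) *
      ((∏ k : Fin n, (z - y k + c) / c) * (∏ i : Fin n, (x i - z) / c)) = 1 := by
    rw [← Finset.prod_mul_distrib, ← Finset.prod_mul_distrib]
    apply Finset.prod_eq_one
    intro ℓ _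
    have h1 : x ℓ - z ≠ 0 := sub_ne_zero.mpr (hxz ℓ)
    have h2 : z + c - y ℓ ≠ 0 := sub_ne_zero.mpr (Ne.symm (hyzc ℓ))
    have h3 : z - y ℓ + c = z + c - y ℓ := by ring
    rw [h3]
    field_simp
  calc (∏ p ∈ Finset.univ.filter (fun p : Fin n × Fin n => p.1 < p.2),
          (c / (x p.1 - x p.2)) * (c / (y p.2 - y p.1))) *
        (∏ ℓ : Fin n, (c / (x ℓ - z)) * (c / (z + c - y ℓ))) *
        (-(∏ k : Fin n, (z - y k + c) / c) * ((∏ i : Fin n, (x i - z) / c) * M.det))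
      = -((∏ p ∈ Finset.univ.filter (fun p : Fin n × Fin n => p.1 < p.2),
          (c / (x p.1 - x p.2)) * (c / (y p.2 - y p.1))) * M.det) *
        ((∏ ℓ : Fin n, (c / (x ℓ - z)) * (c / (z + c - y ℓ))) *
         ((∏ k : Fin n, (z - y k + c) / c) * (∏ i : Fin n, (x i - z) / c))) := by ring
    _ = _ := by rw [hone, mul_one]
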